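/- Suppose u is analytic on the unit disc, bounded away from zero (inf_D |u| > 0), a multiplier of the Bloch space, and φ is an automorphism of the disc. Then for all n ≥ 1, the multiplication operator M_{u_{(n)}} on the Bloch space satisfies ‖M_{u_{(n)}}‖_{B→B} ≤ [‖M_{u'}‖_{B→H^∞_{v_1}}·‖1/u‖_∞ + 2] · n · (1 + n·ρ(φ^{-1}(0),0)) · ‖u_{(n)}‖_∞. -/

import Mathlib

open Complex Metric Set Filter MeasureTheory Finset

noncomputable section

/-- The open unit disc in ℂ. -/
def D1 : Set ℂ := Metric.ball 0 1

/-- Analytic (holomorphic) on the open unit disc. -/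
def AnalyticOnD (f : ℂ → ℂ) : Prop := DifferentiableOn ℂ f D1

/-- Bloch seminorm. -/
def blochSemi (f : ℂ → ℂ) : ℝ := ⨆ z : D1, (1 - ‖(z : ℂ)‖ ^ 2) * ‖deriv f (z : ℂ)‖

/-- Bloch norm. -/
def blochNorm (f : ℂ → ℂ) : ℝ := ‖f 0‖ + blochSemi f

/-- Membership in the Bloch space. -/
def InBloch (f : ℂ → ℂ) : Prop :=
  AnalyticOnD f ∧ ∃ C, ∀ z ∈ D1, (1 - ‖z‖ ^ 2) * ‖deriv f z‖ ≤ C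

/-- Sup norm over the unit disc. -/
def supNormD (f : ℂ → ℂ) : ℝ := ⨆ z : D1, ‖f (z : ℂ)‖

/-- Weighted composition operator uC_φ. -/
def wco (u φ : ℂ → ℂ) (f : ℂ → ℂ) : ℂ → ℂ := fun z => u z * f (φ z)

/-- Multiplication operator M_u. -/
def mult (u : ℂ → ℂ) (f : ℂ → ℂ) : ℂ → ℂ := fun z => u z * f z

/-- The weight u_{(n)} = ∏_{j=0}^{n-1} u ∘ φ_j. -/
def wprod (u φ : ℂ → ℂ) (n : ℕ) : ℂ → ℂ := fun z => ∏ j ∈ Finset.range n, u (φ^[j] z)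

/-- Boundedness of an operator on the Bloch space. -/
def BddOnBloch (T : (ℂ → ℂ) → (ℂ → ℂ)) : Prop :=
  ∃ C, ∀ f, InBloch f → InBloch (T f) ∧ blochNorm (T f) ≤ C * blochNorm f

/-- Operator norm on the Bloch space. -/
def opNormB (T : (ℂ → ℂ) → (ℂ → ℂ)) : ℝ :=
  sInf {C : ℝ | 0 ≤ C ∧ ∀ f, InBloch f → blochNorm (T f) ≤ C * blochNorm f}

/-- Invertibility of an operator on the Bloch space (bounded two-sided inverse). -/
def InvertibleOnBloch (T : (ℂ → ℂ) → (ℂ → ℂ)) : Prop :=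
  BddOnBloch T ∧ ∃ S, BddOnBloch S ∧
    ∀ f, InBloch f → Set.EqOn (S (T f)) f D1 ∧ Set.EqOn (T (S f)) f D1

/-- Spectrum of an operator acting on the Bloch space. -/
def blochSpectrum (T : (ℂ → ℂ) → (ℂ → ℂ)) : Set ℂ :=
  {lam | ¬ InvertibleOnBloch (fun f z => lam * f z - T f z)}

/-- Automorphism of the unit disc (Möbius form). -/
def IsDiscAuto (φ : ℂ → ℂ) : Prop :=
  ∃ lam a : ℂ, ‖lam‖ = 1 ∧ a ∈ D1 ∧ ∀ z, φ z = lam * (a - z) / (1 - (starRingEnd ℂ) a * z)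

/-- Hyperbolic distance on the unit disc. -/
def hypDist (z w : ℂ) : ℝ :=
  (1 / 2) * Real.log ((1 + ‖(z - w) / (1 - (starRingEnd ℂ) z * w)‖) /
    (1 - ‖(z - w) / (1 - (starRingEnd ℂ) z * w)‖))

/-- The disc algebra A(𝔻). -/
def InDiscAlgebra (u : ℂ → ℂ) : Prop :=
  ContinuousOn u (Metric.closedBall 0 1) ∧ AnalyticOnD u

/-- u is bounded away from zero on the unit disc. -/
def BoundedAwayFromZero (u : ℂ → ℂ) : Prop := ∃ δ > 0, ∀ z ∈ D1, δ ≤ ‖u z‖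

/-- Parabolic automorphism with unique fixed point a on the unit circle (φ'(a)=1). -/
def IsParabolicAuto (φ : ℂ → ℂ) (a : ℂ) : Prop :=
  IsDiscAuto φ ∧ ‖a‖ = 1 ∧ φ a = a ∧ deriv φ a = 1 ∧
    ∀ w, ‖w‖ ≤ 1 → φ w = w → w = a

/-- Hyperbolic automorphism with attractive fixed point a and repulsive fixed point b. -/
def IsHyperbolicAuto (φ : ℂ → ℂ) (a b : ℂ) : Prop :=
  IsDiscAuto φ ∧ ‖a‖ = 1 ∧ ‖b‖ = 1 ∧ a ≠ b ∧ φ a = a ∧ φ b = b ∧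
    ∃ μ : ℝ, 0 < μ ∧ μ < 1 ∧ deriv φ a = (μ : ℂ)

/-- Square of the Dirichlet norm (normalized area measure on 𝔻). -/
def dirichletNormSq (f : ℂ → ℂ) : ℝ :=
  ‖f 0‖ ^ 2 + (1 / Real.pi) * ∫ z in D1, ‖deriv f z‖ ^ 2

/-- Dirichlet norm. -/
def dirichletNorm (f : ℂ → ℂ) : ℝ := Real.sqrt (dirichletNormSq f)

/-- Membership in the Dirichlet space. -/
def InDirichlet (f : ℂ → ℂ) : Prop :=
  AnalyticOnD f ∧ MeasureTheory.IntegrableOn (fun z => ‖deriv f z‖ ^ 2) D1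

/-- Boundedness of an operator on the Dirichlet space. -/
def BddOnDirichlet (T : (ℂ → ℂ) → (ℂ → ℂ)) : Prop :=
  ∃ C, ∀ f, InDirichlet f → InDirichlet (T f) ∧ dirichletNorm (T f) ≤ C * dirichletNorm f

/-- Operator norm on the Dirichlet space. -/
def opNormDir (T : (ℂ → ℂ) → (ℂ → ℂ)) : ℝ :=
  sInf {C : ℝ | 0 ≤ C ∧ ∀ f, InDirichlet f → dirichletNorm (T f) ≤ C * dirichletNorm f}

/-- Invertibility of an operator on the Dirichlet space. -/
def InvertibleOnDirichlet (T : (ℂ → ℂ) → (ℂ → ℂ)) : Prop :=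
  BddOnDirichlet T ∧ ∃ S, BddOnDirichlet S ∧
    ∀ f, InDirichlet f → Set.EqOn (S (T f)) f D1 ∧ Set.EqOn (T (S f)) f D1

/-- Spectrum of an operator on the Dirichlet space. -/
def dirichletSpectrum (T : (ℂ → ℂ) → (ℂ → ℂ)) : Set ℂ :=
  {lam | ¬ InvertibleOnDirichlet (fun f z => lam * f z - T f z)}

/-- Operator norm of M_{u'} : B → H^∞_{v₁}. -/
def opNormBtoHv1 (u : ℂ → ℂ) : ℝ :=
  sInf {C : ℝ | 0 ≤ C ∧ ∀ f, InBloch f → ∀ z ∈ D1,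
    (1 - ‖z‖ ^ 2) * ‖deriv u z * f z‖ ≤ C * blochNorm f}

/-- Operator norm of M_{u'} : 𝒟 → A². -/
def opNormDtoA2 (u : ℂ → ℂ) : ℝ :=
  sInf {C : ℝ | 0 ≤ C ∧ ∀ f, InDirichlet f →
    Real.sqrt ((1 / Real.pi) * ∫ z in D1, ‖deriv u z * f z‖ ^ 2) ≤ C * dirichletNorm f}

/-- The logarithmic weight log(e/(1-|z|²)). -/
def logWeight (z : ℂ) : ℝ := Real.log (Real.exp 1 / (1 - ‖z‖ ^ 2))

/-- Characterization of multipliers of the Bloch space: u ∈ H^∞ and the log condition. -/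
def MultBChar (u : ℂ → ℂ) : Prop :=
  (∃ M, ∀ z ∈ D1, ‖u z‖ ≤ M) ∧
  (∃ M, ∀ z ∈ D1, (1 - ‖z‖ ^ 2) * ‖deriv u z‖ * logWeight z ≤ M)


/-!
By the product rule, `u_{(n)}' = ∑_{j<n} (∏_{k≠j} u ∘ φ_k) · (u ∘ φ_j)'`. Since every iterate
`φ_j` is a disc automorphism, `(1-|z|²)|φ_j'(z)| = 1-|φ_j(z)|²`, so with `ψ = φ⁻¹` and `w = φ_j z`
the `j`-th term of `(1-|z|²) u_{(n)}'(z) f(z)` is `(1-|w|²) u'(w) (f ∘ ψ_j)(w)` times the cofactor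
`∏_{k≠j} u ∘ φ_k = u_{(n)} / (u ∘ φ_j)`. The first factor is at most
`‖M_{u'}‖_{B→H^∞_{v_1}} ‖f ∘ ψ_j‖_B`, the cofactor at most `‖1/u‖_∞ ‖u_{(n)}‖_∞`.

Composition with an automorphism does not increase the Bloch seminorm, and the growth estimate
`|f(w) - f(0)| ≤ ‖f‖_semi ρ(w, 0)`, telescoped along the orbit `ψ_i(0)` (consecutive points at
distance `ρ(ψ(0), 0)` after composing with `ψ_i`), gives `‖f ∘ ψ_j‖_B ≤ (1 + j ρ(ψ(0), 0)) ‖f‖_B`.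
-/

lemma mem_D1 {z : ℂ} : z ∈ D1 ↔ ‖z‖ < 1 := by simp [D1]

lemma zero_mem_D1 : (0 : ℂ) ∈ D1 := by simp [mem_D1]

instance : Nonempty D1 := ⟨⟨0, zero_mem_D1⟩⟩

lemma isOpen_D1 : IsOpen D1 := Metric.isOpen_ball

lemma one_sub_norm_sq_pos {z : ℂ} (hz : z ∈ D1) : 0 < 1 - ‖z‖ ^ 2 := by
  rw [mem_D1] at hz; nlinarith [norm_nonneg z]

lemma Real.hasDerivAt_artanh {x : ℝ} (hx : x ∈ Set.Ioo (-1) 1) :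
    HasDerivAt Real.artanh (1 / (1 - x ^ 2)) x := by
  have h1 : 1 + x ≠ 0 := by linarith [hx.1]
  have h2 : 1 - x ≠ 0 := by linarith [hx.2]
  have h3 : 1 - x ^ 2 ≠ 0 := by
    rw [show 1 - x ^ 2 = (1 + x) * (1 - x) by ring]; exact mul_ne_zero h1 h2
  have hlog : HasDerivAt (fun y => 1 / 2 * (Real.log (1 + y) - Real.log (1 - y)))
      (1 / (1 - x ^ 2)) x := by
    refine ((((hasDerivAt_id' x).const_add 1).log h1).sub
      (((hasDerivAt_id' x).const_sub 1).log h2)).const_mul (1 / 2) |>.congr_deriv ?_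
    field_simp
    ring
  refine hlog.congr_of_eventuallyEq ?_
  filter_upwards [isOpen_Ioo.mem_nhds hx] with y hy
  rw [Real.artanh_eq_half_log (Ioo_subset_Icc_self hy),
    Real.log_div (by linarith [hy.1]) (by linarith [hy.2])]

lemma hypDist_zero_right {w : ℂ} (hw : w ∈ D1) : hypDist w 0 = Real.artanh ‖w‖ := by
  have hw1 := (mem_D1.mp hw).le
  rw [Real.artanh_eq_half_log ⟨by linarith [norm_nonneg w], hw1⟩]
  simp [hypDist]

lemma hypDist_zero_nonneg {w : ℂ} (hw : w ∈ D1) : 0 ≤ hypDist w 0 := by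
  rw [hypDist_zero_right hw]
  exact Real.artanh_nonneg (norm_nonneg w)

lemma blochSemi_nonneg (f : ℂ → ℂ) : 0 ≤ blochSemi f :=
  Real.iSup_nonneg fun z => mul_nonneg (one_sub_norm_sq_pos z.2).le (norm_nonneg _)

lemma le_blochSemi {f : ℂ → ℂ} (hf : InBloch f) {z : ℂ} (hz : z ∈ D1) :
    (1 - ‖z‖ ^ 2) * ‖deriv f z‖ ≤ blochSemi f := by
  obtain ⟨C, hC⟩ := hf.2
  exact le_ciSup (f := fun z : D1 => (1 - ‖(z : ℂ)‖ ^ 2) * ‖deriv f z‖)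
    ⟨C, by rintro _ ⟨y, rfl⟩; exact hC y y.2⟩ ⟨z, hz⟩

lemma blochSemi_le {f : ℂ → ℂ} {C : ℝ} (h : ∀ z ∈ D1, (1 - ‖z‖ ^ 2) * ‖deriv f z‖ ≤ C) :
    blochSemi f ≤ C :=
  ciSup_le fun z => h z z.2

lemma blochNorm_nonneg (f : ℂ → ℂ) : 0 ≤ blochNorm f :=
  add_nonneg (norm_nonneg _) (blochSemi_nonneg f)

lemma norm_ofReal_mul {t : ℝ} (ht : 0 ≤ t) (w : ℂ) : ‖(t : ℂ) * w‖ = t * ‖w‖ := by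
  rw [norm_mul, Complex.norm_real, Real.norm_of_nonneg ht]

lemma norm_sub_le_blochSemi_mul_hypDist {f : ℂ → ℂ} (hf : InBloch f) {w : ℂ} (hw : w ∈ D1) :
    ‖f w - f 0‖ ≤ blochSemi f * hypDist w 0 := by
  set r := ‖w‖
  have hr : r < 1 := mem_D1.mp hw
  have hseg : ∀ t ∈ Icc (0 : ℝ) 1, (t : ℂ) * w ∈ D1 := fun t ht => by
    rw [mem_D1, norm_ofReal_mul ht.1]; nlinarith [ht.2, norm_nonneg w]
  have hg : ∀ t ∈ Icc (0 : ℝ) 1,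
      HasDerivAt (fun t : ℝ => f (t * w) - f 0) (deriv f (t * w) * w) t := fun t ht => by
    have hf' := (hf.1.differentiableAt (isOpen_D1.mem_nhds (hseg t ht))).hasDerivAt
    exact (hf'.comp (t : ℂ) (hasDerivAt_mul_const w)).comp_ofReal.sub_const (f 0)
  have hB : ∀ t ∈ Icc (0 : ℝ) 1, HasDerivAt (fun t => blochSemi f * Real.artanh (t * r))
      (blochSemi f * (1 / (1 - (t * r) ^ 2) * r)) t := fun t ht => by
    have htr : t * r ∈ Set.Ioo (-1) 1 := by
      constructor <;> nlinarith [ht.1, ht.2, norm_nonneg w]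
    exact ((Real.hasDerivAt_artanh htr).comp t (hasDerivAt_mul_const r)).const_mul _
  have hbound : ∀ t ∈ Ico (0 : ℝ) 1,
      ‖deriv f (t * w) * w‖ ≤ blochSemi f * (1 / (1 - (t * r) ^ 2) * r) := fun t ht => by
    have ht' := Ico_subset_Icc_self ht
    have hpos := one_sub_norm_sq_pos (hseg t ht')
    have hweight := le_blochSemi hf (hseg t ht')
    rw [norm_ofReal_mul ht'.1] at hpos hweight
    rw [norm_mul, ← mul_assoc, mul_one_div]
    refine mul_le_mul_of_nonneg_right ((le_div_iff₀ hpos).2 ?_) (norm_nonneg w)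
    linarith
  have key := image_norm_le_of_norm_deriv_right_le_deriv_boundary'
    (fun t ht => (hg t ht).continuousAt.continuousWithinAt)
    (fun t ht => (hg t (Ico_subset_Icc_self ht)).hasDerivWithinAt) (by simp)
    (fun t ht => (hB t ht).continuousAt.continuousWithinAt)
    (fun t ht => (hB t (Ico_subset_Icc_self ht)).hasDerivWithinAt) hbound
    (right_mem_Icc.2 zero_le_one)
  simpa [hypDist_zero_right hw] using key

lemma logWeight_eq {z : ℂ} (hz : z ∈ D1) :
    logWeight z = 1 - Real.log (1 - ‖z‖ ^ 2) := by
  rw [logWeight, Real.log_div (Real.exp_ne_zero 1) (one_sub_norm_sq_pos hz).ne', Real.log_exp]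

lemma one_le_logWeight {z : ℂ} (hz : z ∈ D1) : 1 ≤ logWeight z := by
  have hpos := one_sub_norm_sq_pos hz
  rw [logWeight_eq hz]
  linarith [Real.log_nonpos hpos.le (by nlinarith [norm_nonneg z] : 1 - ‖z‖ ^ 2 ≤ 1)]

lemma hypDist_zero_le_logWeight {z : ℂ} (hz : z ∈ D1) : hypDist z 0 ≤ logWeight z := by
  set r := ‖z‖
  have hr : r < 1 := mem_D1.mp hz
  have hr0 : 0 ≤ r := norm_nonneg z
  have hp : 0 < 1 + r := by linarith
  have hm : 0 < 1 - r := by linarith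
  rw [logWeight_eq hz, hypDist_zero_right hz, Real.artanh_eq_half_log ⟨by linarith, hr.le⟩,
    Real.log_div hp.ne' hm.ne', show 1 - r ^ 2 = (1 + r) * (1 - r) by ring,
    Real.log_mul hp.ne' hm.ne']
  linarith [Real.log_le_sub_one_of_pos hp, Real.log_le_sub_one_of_pos hm]

lemma norm_le_blochNorm_mul_logWeight {f : ℂ → ℂ} (hf : InBloch f) {z : ℂ} (hz : z ∈ D1) :
    ‖f z‖ ≤ blochNorm f * logWeight z := by
  have hgrowth := norm_sub_le_blochSemi_mul_hypDist hf hz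
  have hsub : ‖f z‖ ≤ ‖f 0‖ + ‖f z - f 0‖ := by
    simpa using norm_add_le (f 0) (f z - f 0)
  have h1 := mul_le_mul_of_nonneg_left (one_le_logWeight hz) (norm_nonneg (f 0))
  have h2 := mul_le_mul_of_nonneg_left (hypDist_zero_le_logWeight hz) (blochSemi_nonneg f)
  rw [blochNorm, add_mul]
  linarith

def IsDiscIsometry (h : ℂ → ℂ) : Prop :=
  ∀ z ∈ D1, h z ∈ D1 ∧ DifferentiableAt ℂ h z ∧ (1 - ‖z‖ ^ 2) * ‖deriv h z‖ = 1 - ‖h z‖ ^ 2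

namespace IsDiscIsometry

variable {g h : ℂ → ℂ}

lemma mapsTo (hh : IsDiscIsometry h) : MapsTo h D1 D1 := fun z hz => (hh z hz).1

lemma comp (hg : IsDiscIsometry g) (hh : IsDiscIsometry h) : IsDiscIsometry (g ∘ h) := by
  intro z hz
  obtain ⟨hhz, hdh, hwh⟩ := hh z hz
  obtain ⟨hghz, hdg, hwg⟩ := hg (h z) hhz
  refine ⟨hghz, hdg.comp z hdh, ?_⟩
  rw [deriv_comp z hdg hdh, norm_mul, Function.comp_apply, ← hwg, ← hwh]
  ring

lemma id : IsDiscIsometry id := fun z hz => ⟨hz, differentiableAt_id, by simp⟩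

lemma iterate (hh : IsDiscIsometry h) : ∀ n, IsDiscIsometry h^[n]
  | 0 => IsDiscIsometry.id
  | n + 1 => by rw [Function.iterate_succ']; exact hh.comp (hh.iterate n)

lemma differentiableAt_comp {f : ℂ → ℂ} (hh : IsDiscIsometry h) (hf : AnalyticOnD f) {z : ℂ}
    (hz : z ∈ D1) : DifferentiableAt ℂ (f ∘ h) z :=
  (hf.differentiableAt (isOpen_D1.mem_nhds (hh z hz).1)).comp z (hh z hz).2.1

lemma weight_mul_norm_deriv_comp {f : ℂ → ℂ} (hh : IsDiscIsometry h) (hf : AnalyticOnD f)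
    {z : ℂ} (hz : z ∈ D1) :
    (1 - ‖z‖ ^ 2) * ‖deriv (f ∘ h) z‖ = (1 - ‖h z‖ ^ 2) * ‖deriv f (h z)‖ := by
  obtain ⟨hhz, hdh, hwh⟩ := hh z hz
  rw [deriv_comp z (hf.differentiableAt (isOpen_D1.mem_nhds hhz)) hdh, norm_mul, ← hwh]
  ring

lemma inBloch_comp {f : ℂ → ℂ} (hh : IsDiscIsometry h) (hf : InBloch f) :
    InBloch (f ∘ h) ∧ blochSemi (f ∘ h) ≤ blochSemi f := by
  have hweight : ∀ z ∈ D1, (1 - ‖z‖ ^ 2) * ‖deriv (f ∘ h) z‖ ≤ blochSemi f := fun z hz => by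
    rw [hh.weight_mul_norm_deriv_comp hf.1 hz]
    exact le_blochSemi hf (hh z hz).1
  exact ⟨⟨fun z hz => (hh.differentiableAt_comp hf.1 hz).differentiableWithinAt,
    blochSemi f, hweight⟩, blochSemi_le hweight⟩

end IsDiscIsometry

lemma Set.LeftInvOn.iterate {α : Type*} {f g : α → α} {s : Set α} (h : LeftInvOn g f s)
    (hf : MapsTo f s s) : ∀ n, LeftInvOn g^[n] f^[n] s
  | 0 => leftInvOn_id s
  | n + 1 => by
    rw [Function.iterate_succ, Function.iterate_succ']
    exact (h.iterate hf n).comp h (hf.iterate n)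

def mobius (lam a z : ℂ) : ℂ := lam * (a - z) / (1 - (starRingEnd ℂ) a * z)

lemma norm_one_sub_conj_mul_sq_sub_norm_sub_sq (a z : ℂ) :
    ‖1 - (starRingEnd ℂ) a * z‖ ^ 2 - ‖a - z‖ ^ 2 = (1 - ‖a‖ ^ 2) * (1 - ‖z‖ ^ 2) := by
  simp only [Complex.sq_norm, Complex.normSq_apply, Complex.mul_re, Complex.mul_im,
    Complex.sub_re, Complex.sub_im, Complex.conj_re, Complex.conj_im, Complex.one_re,
    Complex.one_im]
  ring

lemma one_sub_conj_mul_ne_zero {a z : ℂ} (ha : a ∈ D1) (hz : z ∈ D1) :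
    1 - (starRingEnd ℂ) a * z ≠ 0 := by
  intro h
  have hlt : ‖(starRingEnd ℂ) a * z‖ < 1 := by
    rw [norm_mul, RCLike.norm_conj]
    rw [mem_D1] at ha hz
    nlinarith [norm_nonneg a, norm_nonneg z]
  rw [← sub_eq_zero.mp h, norm_one] at hlt
  exact lt_irrefl 1 hlt

lemma hasDerivAt_mobius (lam : ℂ) {a z : ℂ} (hd : 1 - (starRingEnd ℂ) a * z ≠ 0) :
    HasDerivAt (mobius lam a)
      (lam * ((starRingEnd ℂ) a * a - 1) / (1 - (starRingEnd ℂ) a * z) ^ 2) z := by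
  have hnum : HasDerivAt (fun z => lam * (a - z)) (-lam) z := by
    simpa using ((hasDerivAt_id z).const_sub a).const_mul lam
  have hden : HasDerivAt (fun z => 1 - (starRingEnd ℂ) a * z) (-(starRingEnd ℂ) a) z := by
    simpa using ((hasDerivAt_id z).const_mul ((starRingEnd ℂ) a)).const_sub 1
  exact (hnum.div hden hd).congr_deriv (by ring)

lemma isDiscIsometry_mobius {lam a : ℂ} (hlam : ‖lam‖ = 1) (ha : a ∈ D1) :
    IsDiscIsometry (mobius lam a) := by
  intro z hz
  have hd := one_sub_conj_mul_ne_zero ha hz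
  have hdpos : 0 < ‖1 - (starRingEnd ℂ) a * z‖ := norm_pos_iff.mpr hd
  have hkey := norm_one_sub_conj_mul_sq_sub_norm_sub_sq a z
  have hpa := one_sub_norm_sq_pos ha
  have hpz := one_sub_norm_sq_pos hz
  have hnorm : ‖mobius lam a z‖ = ‖a - z‖ / ‖1 - (starRingEnd ℂ) a * z‖ := by
    rw [mobius, norm_div, norm_mul, hlam, one_mul]
  have hnum : ‖lam * ((starRingEnd ℂ) a * a - 1)‖ = 1 - ‖a‖ ^ 2 := by
    rw [norm_mul, hlam, one_mul, Complex.conj_mul', ← norm_neg, neg_sub]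
    norm_cast
    rw [Real.norm_of_nonneg hpa.le]
  refine ⟨?_, (hasDerivAt_mobius lam hd).differentiableAt, ?_⟩
  · rw [mem_D1, hnorm, div_lt_one hdpos]
    nlinarith [norm_nonneg (a - z)]
  · rw [(hasDerivAt_mobius lam hd).deriv, norm_div, hnum, norm_pow, hnorm, div_pow]
    field_simp
    linarith

lemma mobius_zero (lam a : ℂ) : mobius lam a 0 = lam * a := by simp [mobius]

lemma leftInvOn_mobius {lam a : ℂ} (hlam : ‖lam‖ = 1) (ha : a ∈ D1) :
    LeftInvOn (mobius lam⁻¹ (lam * a)) (mobius lam a) D1 := by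
  intro z hz
  have hd := one_sub_conj_mul_ne_zero ha hz
  have hlam0 : lam ≠ 0 := norm_ne_zero_iff.mp (by rw [hlam]; exact one_ne_zero)
  have hconj : (starRingEnd ℂ) lam * lam = 1 := by
    rw [Complex.conj_mul', hlam]; norm_num
  have haa : 1 - (starRingEnd ℂ) a * a ≠ 0 := by
    rw [Complex.conj_mul']; norm_cast; exact (one_sub_norm_sq_pos ha).ne'
  have hden : 1 - (starRingEnd ℂ) (lam * a) * mobius lam a z =
      (1 - (starRingEnd ℂ) a * a) / (1 - (starRingEnd ℂ) a * z) := by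
    rw [mobius, map_mul]
    field_simp
    linear_combination (z - a) * (starRingEnd ℂ) a * hconj
  have hd' : 1 - z * (starRingEnd ℂ) a ≠ 0 := by rwa [mul_comm]
  have haa' : 1 - a * (starRingEnd ℂ) a ≠ 0 := by rwa [mul_comm]
  rw [mobius, hden, mobius]
  field_simp
  ring

lemma isDiscIsometry_mobius_inv {lam a : ℂ} (hlam : ‖lam‖ = 1) (ha : a ∈ D1) :
    IsDiscIsometry (mobius lam⁻¹ (lam * a)) :=
  isDiscIsometry_mobius (by simp [hlam]) (by simpa [mem_D1, hlam] using ha)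

lemma mobius_inv_zero {lam : ℂ} (hlam : lam ≠ 0) (a : ℂ) : mobius lam⁻¹ (lam * a) 0 = a := by
  rw [mobius_zero, inv_mul_cancel_left₀ hlam]

lemma le_supNormD {f : ℂ → ℂ} {C : ℝ} (hC : ∀ z ∈ D1, ‖f z‖ ≤ C) {z : ℂ} (hz : z ∈ D1) :
    ‖f z‖ ≤ supNormD f :=
  le_ciSup (f := fun z : D1 => ‖f z‖) ⟨C, by rintro _ ⟨y, rfl⟩; exact hC y y.2⟩ ⟨z, hz⟩

lemma supNormD_nonneg (f : ℂ → ℂ) : 0 ≤ supNormD f :=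
  Real.iSup_nonneg fun _ => norm_nonneg _

lemma BoundedAwayFromZero.ne_zero {u : ℂ → ℂ} (hb : BoundedAwayFromZero u) {z : ℂ}
    (hz : z ∈ D1) : u z ≠ 0 := by
  obtain ⟨δ, hδ, hδu⟩ := hb
  exact norm_pos_iff.mp (hδ.trans_le (hδu z hz))

lemma BoundedAwayFromZero.norm_inv_le_supNormD {u : ℂ → ℂ} (hb : BoundedAwayFromZero u)
    {z : ℂ} (hz : z ∈ D1) : ‖(u z)⁻¹‖ ≤ supNormD fun z => (u z)⁻¹ := by
  obtain ⟨δ, hδ, hδu⟩ := hb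
  exact le_supNormD (C := δ⁻¹) (fun y hy => by rw [norm_inv]; exact inv_anti₀ hδ (hδu y hy)) hz

lemma opNormB_le {T : (ℂ → ℂ) → ℂ → ℂ} {C : ℝ} (hC : 0 ≤ C)
    (hT : ∀ f, InBloch f → blochNorm (T f) ≤ C * blochNorm f) : opNormB T ≤ C :=
  csInf_le ⟨0, fun _ hc => hc.1⟩ ⟨hC, hT⟩

lemma opNormBtoHv1_nonneg (u : ℂ → ℂ) : 0 ≤ opNormBtoHv1 u :=
  Real.sInf_nonneg fun _ hC => hC.1

lemma weight_mul_norm_deriv_mul_le_opNormBtoHv1 {u : ℂ → ℂ} {C : ℝ} (hC0 : 0 ≤ C)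
    (hC : ∀ f, InBloch f → ∀ z ∈ D1, (1 - ‖z‖ ^ 2) * ‖deriv u z * f z‖ ≤ C * blochNorm f)
    {f : ℂ → ℂ} (hf : InBloch f) {z : ℂ} (hz : z ∈ D1) :
    (1 - ‖z‖ ^ 2) * ‖deriv u z * f z‖ ≤ opNormBtoHv1 u * blochNorm f := by
  have hne : {C : ℝ | 0 ≤ C ∧ ∀ f, InBloch f → ∀ z ∈ D1,
      (1 - ‖z‖ ^ 2) * ‖deriv u z * f z‖ ≤ C * blochNorm f}.Nonempty := ⟨C, hC0, hC⟩
  rcases (blochNorm_nonneg f).eq_or_lt with h0 | hpos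
  · simpa [← h0] using hC f hf z hz
  · rw [← div_le_iff₀ hpos]
    exact le_csInf hne fun C' hC' => (div_le_iff₀ hpos).mpr (hC'.2 f hf z hz)

lemma MultBChar.weight_mul_norm_deriv_mul_le {u : ℂ → ℂ} (hm : MultBChar u) {f : ℂ → ℂ}
    (hf : InBloch f) {z : ℂ} (hz : z ∈ D1) :
    (1 - ‖z‖ ^ 2) * ‖deriv u z * f z‖ ≤ opNormBtoHv1 u * blochNorm f := by
  obtain ⟨M, hM⟩ := hm.2
  refine weight_mul_norm_deriv_mul_le_opNormBtoHv1 (le_max_right M 0) (fun f hf z hz => ?_) hf hz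
  calc (1 - ‖z‖ ^ 2) * ‖deriv u z * f z‖
      ≤ (1 - ‖z‖ ^ 2) * ‖deriv u z‖ * (blochNorm f * logWeight z) := by
        rw [norm_mul, ← mul_assoc]
        exact mul_le_mul_of_nonneg_left (norm_le_blochNorm_mul_logWeight hf hz)
          (mul_nonneg (one_sub_norm_sq_pos hz).le (norm_nonneg _))
    _ = (1 - ‖z‖ ^ 2) * ‖deriv u z‖ * logWeight z * blochNorm f := by ring
    _ ≤ max M 0 * blochNorm f :=
        mul_le_mul_of_nonneg_right ((hM z hz).trans (le_max_left M 0)) (blochNorm_nonneg f)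

lemma blochNorm_mult_le {w f : ℂ → ℂ} {W K : ℝ} (hw : AnalyticOnD w)
    (hW : ∀ z ∈ D1, ‖w z‖ ≤ W) (hK : ∀ z ∈ D1, (1 - ‖z‖ ^ 2) * (‖deriv w z‖ * ‖f z‖) ≤ K)
    (hf : InBloch f) : blochNorm (mult w f) ≤ W * blochNorm f + K := by
  have hW0 : 0 ≤ W := (norm_nonneg _).trans (hW 0 zero_mem_D1)
  have hsemi : blochSemi (mult w f) ≤ K + W * blochSemi f := blochSemi_le fun z hz => by
    have hpos := (one_sub_norm_sq_pos hz).le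
    have hderiv : deriv (mult w f) z = deriv w z * f z + w z * deriv f z :=
      deriv_mul (hw.differentiableAt (isOpen_D1.mem_nhds hz))
        (hf.1.differentiableAt (isOpen_D1.mem_nhds hz))
    calc (1 - ‖z‖ ^ 2) * ‖deriv (mult w f) z‖
        ≤ (1 - ‖z‖ ^ 2) * (‖deriv w z * f z‖ + ‖w z * deriv f z‖) := by
          rw [hderiv]; exact mul_le_mul_of_nonneg_left (norm_add_le _ _) hpos
      _ = (1 - ‖z‖ ^ 2) * (‖deriv w z‖ * ‖f z‖) + ‖w z‖ * ((1 - ‖z‖ ^ 2) * ‖deriv f z‖) := by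
          rw [norm_mul, norm_mul]; ring
      _ ≤ K + W * blochSemi f :=
          add_le_add (hK z hz) (mul_le_mul (hW z hz) (le_blochSemi hf hz)
            (mul_nonneg hpos (norm_nonneg _)) hW0)
  have hval : ‖mult w f 0‖ ≤ W * ‖f 0‖ := by
    rw [mult, norm_mul]
    exact mul_le_mul_of_nonneg_right (hW 0 zero_mem_D1) (norm_nonneg _)
  rw [blochNorm, blochNorm, mul_add]
  linarith

lemma IsDiscIsometry.norm_iterate_zero_sub_le {ψ f : ℂ → ℂ} (hψ : IsDiscIsometry ψ)
    (hf : InBloch f) : ∀ j : ℕ, ‖f (ψ^[j] 0) - f 0‖ ≤ j * (blochSemi f * hypDist (ψ 0) 0)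
  | 0 => by simp
  | j + 1 => by
    obtain ⟨hg, hsemi⟩ := (hψ.iterate j).inBloch_comp hf
    have hstep : ‖f (ψ^[j + 1] 0) - f (ψ^[j] 0)‖ ≤ blochSemi f * hypDist (ψ 0) 0 := by
      have := norm_sub_le_blochSemi_mul_hypDist hg (hψ 0 zero_mem_D1).1
      rw [Function.comp_apply, Function.comp_apply, ← Function.iterate_succ_apply] at this
      exact this.trans (mul_le_mul_of_nonneg_right hsemi
        (hypDist_zero_nonneg (hψ 0 zero_mem_D1).1))
    calc ‖f (ψ^[j + 1] 0) - f 0‖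
        ≤ ‖f (ψ^[j + 1] 0) - f (ψ^[j] 0)‖ + ‖f (ψ^[j] 0) - f 0‖ :=
          norm_sub_le_norm_sub_add_norm_sub _ _ _
      _ ≤ ((j + 1 : ℕ) : ℝ) * (blochSemi f * hypDist (ψ 0) 0) := by
        push_cast
        linarith [hψ.norm_iterate_zero_sub_le hf j]

lemma IsDiscIsometry.blochNorm_comp_iterate_le {ψ f : ℂ → ℂ} (hψ : IsDiscIsometry ψ)
    (hf : InBloch f) (j : ℕ) :
    blochNorm (f ∘ ψ^[j]) ≤ (1 + j * hypDist (ψ 0) 0) * blochNorm f := by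
  have hsemi := ((hψ.iterate j).inBloch_comp hf).2
  have hval : ‖f (ψ^[j] 0)‖ ≤ ‖f 0‖ + j * (blochSemi f * hypDist (ψ 0) 0) := by
    have := norm_add_le (f 0) (f (ψ^[j] 0) - f 0)
    rw [add_sub_cancel] at this
    linarith [hψ.norm_iterate_zero_sub_le hf j]
  have hρ := mul_nonneg (Nat.cast_nonneg j) (hypDist_zero_nonneg (hψ 0 zero_mem_D1).1)
  have := mul_nonneg hρ (norm_nonneg (f 0))
  rw [blochNorm, blochNorm, Function.comp_apply]
  nlinarith

section WeightedProduct

variable {u φ ψ : ℂ → ℂ} {n : ℕ} {z : ℂ}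

lemma hasDerivAt_wprod (hu : AnalyticOnD u) (hφ : IsDiscIsometry φ) (n : ℕ) (hz : z ∈ D1) :
    HasDerivAt (wprod u φ n)
      (∑ j ∈ range n, (∏ k ∈ (range n).erase j, u (φ^[k] z)) * deriv (u ∘ φ^[j]) z) z :=
  HasDerivAt.fun_finsetProd fun j _ => ((hφ.iterate j).differentiableAt_comp hu hz).hasDerivAt

lemma analyticOnD_wprod (hu : AnalyticOnD u) (hφ : IsDiscIsometry φ) (n : ℕ) :
    AnalyticOnD (wprod u φ n) := fun _ hz =>
  (hasDerivAt_wprod hu hφ n hz).differentiableAt.differentiableWithinAt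

lemma norm_wprod_le {M : ℝ} (hφ : MapsTo φ D1 D1) (hM : ∀ z ∈ D1, ‖u z‖ ≤ M) (n : ℕ)
    (hz : z ∈ D1) : ‖wprod u φ n z‖ ≤ M ^ n := by
  rw [wprod, norm_prod]
  calc ∏ j ∈ range n, ‖u (φ^[j] z)‖ ≤ ∏ _j ∈ range n, M :=
        Finset.prod_le_prod (fun _ _ => norm_nonneg _) fun j _ => hM _ (hφ.iterate j hz)
    _ = M ^ n := by simp

lemma norm_wprod_le_supNormD (hφ : MapsTo φ D1 D1) (hM : ∃ M, ∀ z ∈ D1, ‖u z‖ ≤ M) (n : ℕ)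
    (hz : z ∈ D1) : ‖wprod u φ n z‖ ≤ supNormD (wprod u φ n) := by
  obtain ⟨M, hM⟩ := hM
  exact le_supNormD (fun y hy => norm_wprod_le hφ hM n hy) hz

lemma norm_prod_erase_le {U W : ℝ} (hu0 : ∀ z ∈ D1, u z ≠ 0) (hφ : MapsTo φ D1 D1)
    (hU : ∀ z ∈ D1, ‖(u z)⁻¹‖ ≤ U) (hW : ‖wprod u φ n z‖ ≤ W) (hz : z ∈ D1) {j : ℕ}
    (hj : j ∈ range n) : ‖∏ k ∈ (range n).erase j, u (φ^[k] z)‖ ≤ U * W := by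
  have hjz := hφ.iterate j hz
  have heq : ∏ k ∈ (range n).erase j, u (φ^[k] z) = (u (φ^[j] z))⁻¹ * wprod u φ n z := by
    rw [wprod, ← Finset.mul_prod_erase _ _ hj, inv_mul_cancel_left₀ (hu0 _ hjz)]
  rw [heq, norm_mul]
  exact mul_le_mul (hU _ hjz) hW (norm_nonneg _) ((norm_nonneg _).trans (hU _ hjz))

lemma weight_mul_norm_deriv_comp_iterate_mul_le {N : ℝ} (hu : AnalyticOnD u)
    (hφ : IsDiscIsometry φ) (hψ : IsDiscIsometry ψ) (hψφ : LeftInvOn ψ φ D1) (hN0 : 0 ≤ N)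
    (hN : ∀ f, InBloch f → ∀ z ∈ D1, (1 - ‖z‖ ^ 2) * ‖deriv u z * f z‖ ≤ N * blochNorm f)
    {f : ℂ → ℂ} (hf : InBloch f) (j : ℕ) (hz : z ∈ D1) :
    (1 - ‖z‖ ^ 2) * (‖deriv (u ∘ φ^[j]) z‖ * ‖f z‖) ≤
      N * ((1 + j * hypDist (ψ 0) 0) * blochNorm f) := by
  have hjz := (hφ.iterate j).mapsTo hz
  have hback : (f ∘ ψ^[j]) (φ^[j] z) = f z := congrArg f (hψφ.iterate hφ.mapsTo j hz)
  calc (1 - ‖z‖ ^ 2) * (‖deriv (u ∘ φ^[j]) z‖ * ‖f z‖)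
      = (1 - ‖φ^[j] z‖ ^ 2) * ‖deriv u (φ^[j] z) * (f ∘ ψ^[j]) (φ^[j] z)‖ := by
        rw [← mul_assoc, (hφ.iterate j).weight_mul_norm_deriv_comp hu hz, hback, norm_mul,
          mul_assoc]
    _ ≤ N * blochNorm (f ∘ ψ^[j]) := hN _ ((hψ.iterate j).inBloch_comp hf).1 _ hjz
    _ ≤ N * ((1 + j * hypDist (ψ 0) 0) * blochNorm f) :=
        mul_le_mul_of_nonneg_left (hψ.blochNorm_comp_iterate_le hf j) hN0

lemma weight_mul_norm_deriv_wprod_mul_le {U W N : ℝ} (hu : AnalyticOnD u)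
    (hφ : IsDiscIsometry φ) (hψ : IsDiscIsometry ψ) (hψφ : LeftInvOn ψ φ D1) (hN0 : 0 ≤ N)
    (hN : ∀ f, InBloch f → ∀ z ∈ D1, (1 - ‖z‖ ^ 2) * ‖deriv u z * f z‖ ≤ N * blochNorm f)
    (hu0 : ∀ z ∈ D1, u z ≠ 0) (hU : ∀ z ∈ D1, ‖(u z)⁻¹‖ ≤ U)
    (hW : ∀ z ∈ D1, ‖wprod u φ n z‖ ≤ W) {f : ℂ → ℂ} (hf : InBloch f) (hz : z ∈ D1) :
    (1 - ‖z‖ ^ 2) * (‖deriv (wprod u φ n) z‖ * ‖f z‖) ≤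
      n * (U * W * (N * ((1 + n * hypDist (ψ 0) 0) * blochNorm f))) := by
  set R := N * ((1 + n * hypDist (ψ 0) 0) * blochNorm f)
  have hUW : 0 ≤ U * W := mul_nonneg ((norm_nonneg _).trans (hU z hz))
    ((norm_nonneg _).trans (hW z hz))
  have hterm : ∀ j ∈ range n, (1 - ‖z‖ ^ 2) *
      (‖(∏ k ∈ (range n).erase j, u (φ^[k] z)) * deriv (u ∘ φ^[j]) z‖ * ‖f z‖) ≤ U * W * R := by
    intro j hj
    have hjn : (j : ℝ) ≤ n := by exact_mod_cast (mem_range.mp hj).le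
    have hR : N * ((1 + j * hypDist (ψ 0) 0) * blochNorm f) ≤ R :=
      mul_le_mul_of_nonneg_left (mul_le_mul_of_nonneg_right (add_le_add le_rfl
        (mul_le_mul_of_nonneg_right hjn (hypDist_zero_nonneg (hψ 0 zero_mem_D1).1)))
        (blochNorm_nonneg f)) hN0
    rw [norm_mul, mul_assoc, mul_left_comm]
    exact mul_le_mul (norm_prod_erase_le hu0 hφ.mapsTo hU (hW z hz) hz hj)
      ((weight_mul_norm_deriv_comp_iterate_mul_le hu hφ hψ hψφ hN0 hN hf j hz).trans hR)
      (mul_nonneg (one_sub_norm_sq_pos hz).le (by positivity)) hUW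
  rw [(hasDerivAt_wprod hu hφ n hz).deriv]
  calc (1 - ‖z‖ ^ 2) * (‖∑ j ∈ range n,
        (∏ k ∈ (range n).erase j, u (φ^[k] z)) * deriv (u ∘ φ^[j]) z‖ * ‖f z‖)
      ≤ ∑ j ∈ range n, (1 - ‖z‖ ^ 2) *
        (‖(∏ k ∈ (range n).erase j, u (φ^[k] z)) * deriv (u ∘ φ^[j]) z‖ * ‖f z‖) := by
        rw [← Finset.mul_sum, ← Finset.sum_mul]
        gcongr
        · exact (one_sub_norm_sq_pos hz).le
        · exact norm_sum_le _ _
    _ ≤ ∑ _j ∈ range n, U * W * R := Finset.sum_le_sum hterm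
    _ = n * (U * W * R) := by simp

end WeightedProduct

/-- norm estimate for M_{u_{(n)}} on the Bloch space. -/
theorem stmt_13 (u φ : ℂ → ℂ) (lam a : ℂ) (hu : AnalyticOnD u)
    (hb : BoundedAwayFromZero u) (hm : MultBChar u)
    (hlam : ‖lam‖ = 1) (ha : a ∈ D1)
    (hφ : ∀ z, φ z = lam * (a - z) / (1 - (starRingEnd ℂ) a * z)) :
    ∀ n : ℕ, 1 ≤ n →
      opNormB (mult (wprod u φ n)) ≤
        (opNormBtoHv1 u * supNormD (fun z => (u z)⁻¹) + 2) * n *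
          (1 + n * hypDist a 0) * supNormD (wprod u φ n) := by
  intro n hn
  obtain rfl : φ = mobius lam a := funext hφ
  have hφ := isDiscIsometry_mobius hlam ha
  have hW := fun z (hz : z ∈ D1) => norm_wprod_le_supNormD hφ.mapsTo hm.1 n hz
  have hK := fun f (hf : InBloch f) z (hz : z ∈ D1) => weight_mul_norm_deriv_wprod_mul_le hu hφ
    (isDiscIsometry_mobius_inv hlam ha) (leftInvOn_mobius hlam ha) (opNormBtoHv1_nonneg u)
    (fun g hg y hy => hm.weight_mul_norm_deriv_mul_le hg hy) (fun y hy => hb.ne_zero hy)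
    (fun y hy => hb.norm_inv_le_supNormD hy) hW hf hz
  simp only [mobius_inv_zero (ne_zero_of_norm_ne_zero (by rw [hlam]; exact one_ne_zero))] at hK
  have hρ := hypDist_zero_nonneg ha
  have hq : 1 ≤ (n : ℝ) * (1 + n * hypDist a 0) := by
    have : (1 : ℝ) ≤ n := by exact_mod_cast hn
    nlinarith [mul_nonneg (mul_nonneg n.cast_nonneg n.cast_nonneg) hρ]
  have hNU := mul_nonneg (opNormBtoHv1_nonneg u) (supNormD_nonneg fun z => (u z)⁻¹)
  refine opNormB_le ?_ fun f hf =>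
    (blochNorm_mult_le (analyticOnD_wprod hu hφ n) hW (hK f hf) hf).trans ?_
  · exact mul_nonneg (mul_nonneg (mul_nonneg (by linarith) n.cast_nonneg)
      (add_nonneg zero_le_one (mul_nonneg n.cast_nonneg hρ))) (supNormD_nonneg _)
  · have hWB := mul_nonneg (supNormD_nonneg (wprod u (mobius lam a) n)) (blochNorm_nonneg f)
    nlinarith [mul_le_mul_of_nonneg_left hq hWB]
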